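/- arXiv:2309.06195 — 5 statements merged into one kernel-verified Lean document; each statement's English description precedes it below -/
import Mathlib

section
/- Let F : ℝ^P → ℝ^{m×T} be continuously differentiable, let X ∈ ℝ^{m×T}, and let L(w) = (1/2)‖F(w) − X‖_F² be the squared loss. Fix μ > 0 and a set C ⊆ ℝ^P. If for every w ∈ C the minimum eigenvalue of the tangent kernel matrix K(w) is at least μ (equivalently, vᵀK(w)v ≥ μ‖v‖² for all v ∈ ℝ^{mT}), then L satisfies the μ-PL* condition on C, i.e., ‖∇_w L(w)‖² ≥ μ L(w) for all w ∈ C. -/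
/-!
Writing `J(w)` for the derivative of `F` at `w` and `v = F(w) − X`, the gradient of the squared
loss is `∇L(w) = J(w)ᵀ v`, hence `‖∇L(w)‖² = vᵀ J(w) J(w)ᵀ v = vᵀ K(w) v ≥ μ ‖v‖² = 2 μ L(w)`;
averaging with `‖∇L(w)‖² ≥ 0` gives `‖∇L(w)‖² ≥ μ L(w)`.
-/

open scoped BigOperators Matrix

/-- The tangent kernel matrix `K(w) = J(w) J(w)ᵀ` of a map
`F : ℝ^P → ℝ^{m×T}` (with Euclidean/Frobenius structure), where
`J(w)` is the Jacobian of `w ↦ vec (F w)`. -/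
noncomputable def tangentKernel {ι κ : Type*} [Fintype ι] [DecidableEq ι] [Fintype κ]
    (F : EuclideanSpace ℝ ι → EuclideanSpace ℝ κ)
    (w : EuclideanSpace ℝ ι) : Matrix κ κ ℝ :=
  (Matrix.of fun a p => fderiv ℝ F w (EuclideanSpace.single p 1) a) *
    (Matrix.of fun a p => fderiv ℝ F w (EuclideanSpace.single p 1) a)ᵀ

open scoped RealInnerProductSpace

theorem HasFDerivAt.hasGradientAt_half_norm_sub_sq {E G : Type*}
    [NormedAddCommGroup E] [InnerProductSpace ℝ E] [CompleteSpace E]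
    [NormedAddCommGroup G] [InnerProductSpace ℝ G] [CompleteSpace G]
    {f : E → G} {f' : E →L[ℝ] G} {x : E} (hf : HasFDerivAt f f' x) (y : G) :
    HasGradientAt (fun u => (1 / 2 : ℝ) * ‖f u - y‖ ^ 2) (f'.adjoint (f x - y)) x := by
  rw [hasGradientAt_iff_hasFDerivAt]
  refine (((hf.sub_const y).norm_sq).const_mul (1 / 2 : ℝ)).congr_fderiv ?_
  ext u
  simp [ContinuousLinearMap.adjoint_inner_left]

section

variable {ι κ : Type*} [Fintype ι] [DecidableEq ι] [Fintype κ]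

theorem EuclideanSpace.adjoint_apply_eq_vecMul
    (A : EuclideanSpace ℝ ι →L[ℝ] EuclideanSpace ℝ κ) (v : EuclideanSpace ℝ κ) (p : ι) :
    A.adjoint v p = (v.ofLp ᵥ* Matrix.of fun a q => A (EuclideanSpace.single q 1) a) p :=
  calc A.adjoint v p = ⟪A.adjoint v, EuclideanSpace.single p 1⟫ := by
        simp [EuclideanSpace.inner_single_right]
    _ = ⟪v, A (EuclideanSpace.single p 1)⟫ := A.adjoint_inner_left ..
    _ = _ := by simp [PiLp.inner_apply, Matrix.vecMul, dotProduct, mul_comm]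

theorem dotProduct_tangentKernel_mulVec (F : EuclideanSpace ℝ ι → EuclideanSpace ℝ κ)
    (w : EuclideanSpace ℝ ι) (v : EuclideanSpace ℝ κ) :
    v.ofLp ⬝ᵥ tangentKernel F w *ᵥ v.ofLp = ‖(fderiv ℝ F w).adjoint v‖ ^ 2 := by
  rw [tangentKernel, ← Matrix.mulVec_mulVec, Matrix.dotProduct_mulVec, Matrix.mulVec_transpose,
    EuclideanSpace.real_norm_sq_eq]
  simp only [EuclideanSpace.adjoint_apply_eq_vecMul, dotProduct, sq]

end

theorem squared_loss_PLstar_of_uniform_conditioning_general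
    {P m T : ℕ}
    (F : EuclideanSpace ℝ (Fin P) → EuclideanSpace ℝ (Fin m × Fin T))
    (hF : ContDiff ℝ 1 F)
    (X : EuclideanSpace ℝ (Fin m × Fin T))
    (μ : ℝ)
    (C : Set (EuclideanSpace ℝ (Fin P)))
    (hcond : ∀ w ∈ C, ∀ v : Fin m × Fin T → ℝ,
      μ * (∑ i, v i ^ 2) ≤ v ⬝ᵥ (tangentKernel F w).mulVec v) :
    ∀ w ∈ C,
      μ * ((1 / 2) * ‖F w - X‖ ^ 2) ≤
        ‖gradient (fun u => (1 / 2) * ‖F u - X‖ ^ 2) w‖ ^ 2 := by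
  intro w hw
  have hgrad := ((hF.differentiable one_ne_zero w).hasFDerivAt.hasGradientAt_half_norm_sub_sq
    X).gradient
  have hK := hcond w hw (F w - X).ofLp
  rw [← EuclideanSpace.real_norm_sq_eq, dotProduct_tangentKernel_mulVec, ← hgrad] at hK
  linarith [sq_nonneg ‖gradient (fun u => (1 / 2) * ‖F u - X‖ ^ 2) w‖]

/-- If the tangent kernel of a continuously differentiable model
`F : ℝ^P → ℝ^{m×T}` is uniformly conditioned on `C` (i.e. `vᵀ K(w) v ≥ μ ‖v‖²`
for all `v` and all `w ∈ C`), then the squared loss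
`L(w) = (1/2)‖F(w) − X‖_F²` satisfies the `μ`-PL* condition on `C`. -/
theorem squared_loss_PLstar_of_uniform_conditioning
    {P m T : ℕ}
    (F : EuclideanSpace ℝ (Fin P) → EuclideanSpace ℝ (Fin m × Fin T))
    (hF : ContDiff ℝ 1 F)
    (X : EuclideanSpace ℝ (Fin m × Fin T))
    (μ : ℝ) (hμ : 0 < μ)
    (C : Set (EuclideanSpace ℝ (Fin P)))
    (hcond : ∀ w ∈ C, ∀ v : Fin m × Fin T → ℝ,
      μ * (∑ i, v i ^ 2) ≤ v ⬝ᵥ (tangentKernel F w).mulVec v) :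
    ∀ w ∈ C,
      μ * ((1 / 2) * ‖F w - X‖ ^ 2) ≤
        ‖gradient (fun u => (1 / 2) * ‖F u - X‖ ^ 2) w‖ ^ 2 :=
  squared_loss_PLstar_of_uniform_conditioning_general F hF X μ C hcond
end

section
/- Let σ : ℝ → ℝ be L_σ-Lipschitz. Fix y ∈ ℝⁿ with ‖y‖ ≤ √n C_y and z⁰, u⁰ ∈ ℝ^m with ‖z⁰‖ ≤ √m C_z and ‖u⁰‖ ≤ √m C_u, and for l = 1,…,L let W₁^l ∈ ℝ^{m×n} with spectral norm ‖W₁^l‖ ≤ (c₁₀ + R₁/√n)√n and W₂^l ∈ ℝ^{m×m} with ‖W₂^l‖ ≤ (c₂₀ + R₂/√m)√m. Define the ADMM-CSNet layers x^l = (1/√n) W₁^l y + (1/√m) W₂^l (z^{l−1} − u^{l−1}), z^l = σ(x^l + u^{l−1}) (σ applied entrywise), u^l = u^{l−1} + x^l − z^l. Then ‖z^l‖ ≤ c_z^l and ‖u^l‖ ≤ c_u^l for all l ∈ {0,1,…,L}, where c_z⁰ = √m C_z, c_u⁰ = √m C_u, c_z^l = L_σ (c₁₀ + R₁/√n)√n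 C_y + L_σ (c₂₀ + R₂/√m) c_z^{l−1} + L_σ (1 + c₂₀ + R₂/√m) c_u^{l−1} + √m |σ(0)|, and c_u^l = (c₁₀ + R₁/√n)√n C_y + (c₂₀ + R₂/√m) c_z^{l−1} + (c₂₀ + R₂/√m + 1) c_u^{l−1} + c_z^l. -/
open scoped BigOperators

/-- The spectral (ℓ²-operator) norm of a real matrix. -/
noncomputable def specNorm {m n : ℕ} (M : Matrix (Fin m) (Fin n) ℝ) : ℝ :=
  ‖LinearMap.toContinuousLinearMap (Matrix.toEuclideanLin M)‖

/-!
By induction on the layer, using only the triangle inequality: the spectral-norm bounds give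
`‖x^l‖ ≤ (c₁₀ + R₁/√n) ‖y‖ + (c₂₀ + R₂/√m) ‖z^{l-1} - u^{l-1}‖`, the Lipschitz estimate
`|σ t| ≤ L_σ |t| + |σ 0|` applied entrywise gives `‖z^l‖ ≤ L_σ ‖x^l + u^{l-1}‖ + √m |σ 0|`, and
`‖u^l‖ ≤ ‖u^{l-1}‖ + ‖x^l‖ + ‖z^l‖`.
-/

open Real WithLp

lemma nonneg_of_forall_abs_sub_le_mul {σ : ℝ → ℝ} {K : ℝ}
    (hσ : ∀ a b, |σ a - σ b| ≤ K * |a - b|) : 0 ≤ K := by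
  simpa using (abs_nonneg _).trans (hσ 1 0)

lemma EuclideanSpace.norm_le_norm_of_forall_abs_le {ι : Type*} [Fintype ι]
    {v w : EuclideanSpace ℝ ι} (h : ∀ i, |v i| ≤ |w i|) : ‖v‖ ≤ ‖w‖ := by
  rw [EuclideanSpace.norm_eq, EuclideanSpace.norm_eq]
  gcongr with i
  exact h i

lemma EuclideanSpace.norm_toLp_const {ι : Type*} [Fintype ι] (c : ℝ) :
    ‖(toLp 2 fun _ => c : EuclideanSpace ℝ ι)‖ = √(Fintype.card ι) * |c| := by
  simp [EuclideanSpace.norm_eq, Real.sqrt_mul (Nat.cast_nonneg _), Real.sqrt_sq_eq_abs]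

lemma EuclideanSpace.norm_toLp_comp_le {ι : Type*} [Fintype ι] {σ : ℝ → ℝ} {K : ℝ}
    (hσ : ∀ a b, |σ a - σ b| ≤ K * |a - b|) (v : EuclideanSpace ℝ ι) :
    ‖(toLp 2 fun i => σ (v i) : EuclideanSpace ℝ ι)‖ ≤
      K * ‖v‖ + √(Fintype.card ι) * |σ 0| := by
  have hK := nonneg_of_forall_abs_sub_le_mul hσ
  set c : EuclideanSpace ℝ ι := toLp 2 fun _ => σ 0
  have hdiff : ‖(toLp 2 fun i => σ (v i)) - c‖ ≤ K * ‖v‖ := by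
    rw [← Real.norm_of_nonneg hK, ← norm_smul]
    exact EuclideanSpace.norm_le_norm_of_forall_abs_le fun i => by
      simpa [c, abs_mul, abs_of_nonneg hK] using hσ (v i) 0
  calc _ ≤ ‖(toLp 2 fun i => σ (v i)) - c‖ + ‖c‖ := norm_le_norm_sub_add _ _
    _ ≤ K * ‖v‖ + √(Fintype.card ι) * |σ 0| :=
        add_le_add hdiff (EuclideanSpace.norm_toLp_const _).le

lemma norm_toEuclideanLin_le_specNorm_mul {m n : ℕ} (M : Matrix (Fin m) (Fin n) ℝ)
    (v : EuclideanSpace ℝ (Fin n)) : ‖Matrix.toEuclideanLin M v‖ ≤ specNorm M * ‖v‖ :=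
  (LinearMap.toContinuousLinearMap (Matrix.toEuclideanLin M)).le_opNorm v

lemma norm_inv_smul_toEuclideanLin_le {m n : ℕ} {M : Matrix (Fin m) (Fin n) ℝ} {c s : ℝ}
    (hc : 0 ≤ c) (hs : 0 ≤ s) (hM : specNorm M ≤ c * s) (v : EuclideanSpace ℝ (Fin n)) :
    ‖s⁻¹ • Matrix.toEuclideanLin M v‖ ≤ c * ‖v‖ := by
  rcases hs.eq_or_lt with rfl | hs
  · simpa using mul_nonneg hc (norm_nonneg v)
  rw [norm_smul, Real.norm_of_nonneg (inv_nonneg.2 hs.le), inv_mul_le_iff₀ hs]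
  calc _ ≤ specNorm M * ‖v‖ := norm_toEuclideanLin_le_specNorm_mul M v
    _ ≤ c * s * ‖v‖ := by gcongr
    _ = s * (c * ‖v‖) := by ring

lemma norm_inv_sqrt_smul_toEuclideanLin_add_le {k n m : ℕ} {A : Matrix (Fin m) (Fin k) ℝ}
    {B : Matrix (Fin m) (Fin n) ℝ} {a b : ℝ} (ha : 0 ≤ a) (hb : 0 ≤ b)
    (hA : specNorm A ≤ a * √k) (hB : specNorm B ≤ b * √n) (v : EuclideanSpace ℝ (Fin k))
    (w : EuclideanSpace ℝ (Fin n)) :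
    ‖(√k)⁻¹ • Matrix.toEuclideanLin A v + (√n)⁻¹ • Matrix.toEuclideanLin B w‖ ≤
      a * ‖v‖ + b * ‖w‖ :=
  norm_add_le_of_le (norm_inv_smul_toEuclideanLin_le ha (sqrt_nonneg _) hA v)
    (norm_inv_smul_toEuclideanLin_le hb (sqrt_nonneg _) hB w)

theorem admm_csnet_hidden_layer_norm_bound_general
    (n m L : ℕ) (σ : ℝ → ℝ) (L_σ : ℝ)
    (hσ : ∀ a b : ℝ, |σ a - σ b| ≤ L_σ * |a - b|)
    (c₁₀ c₂₀ R₁ R₂ C_y C_z C_u : ℝ)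
    (hc₁₀ : 0 ≤ c₁₀) (hc₂₀ : 0 ≤ c₂₀) (hR₁ : 0 ≤ R₁) (hR₂ : 0 ≤ R₂)
    (y : EuclideanSpace ℝ (Fin n)) (hy : ‖y‖ ≤ Real.sqrt n * C_y)
    (W₁ : ℕ → Matrix (Fin m) (Fin n) ℝ) (W₂ : ℕ → Matrix (Fin m) (Fin m) ℝ)
    (hW₁ : ∀ l, 1 ≤ l → l ≤ L →
      specNorm (W₁ l) ≤ (c₁₀ + R₁ / Real.sqrt n) * Real.sqrt n)
    (hW₂ : ∀ l, 1 ≤ l → l ≤ L →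
      specNorm (W₂ l) ≤ (c₂₀ + R₂ / Real.sqrt m) * Real.sqrt m)
    (x z u : ℕ → EuclideanSpace ℝ (Fin m))
    (hz0 : ‖z 0‖ ≤ Real.sqrt m * C_z)
    (hu0 : ‖u 0‖ ≤ Real.sqrt m * C_u)
    (hx : ∀ l, l < L → x (l + 1) = fun i =>
      (Real.sqrt n)⁻¹ * (W₁ (l + 1)).mulVec y i
        + (Real.sqrt m)⁻¹ * (W₂ (l + 1)).mulVec (z l - u l) i)
    (hz : ∀ l, l < L → z (l + 1) = fun i => σ (x (l + 1) i + u l i))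
    (hu : ∀ l, l < L → u (l + 1) = u l + x (l + 1) - z (l + 1))
    (cz cu : ℕ → ℝ)
    (hcz0 : cz 0 = Real.sqrt m * C_z) (hcu0 : cu 0 = Real.sqrt m * C_u)
    (hczrec : ∀ l, cz (l + 1) =
      L_σ * (c₁₀ + R₁ / Real.sqrt n) * Real.sqrt n * C_y
        + L_σ * (c₂₀ + R₂ / Real.sqrt m) * cz l
        + L_σ * (1 + c₂₀ + R₂ / Real.sqrt m) * cu l
        + Real.sqrt m * |σ 0|)
    (hcurec : ∀ l, cu (l + 1) =
      (c₁₀ + R₁ / Real.sqrt n) * Real.sqrt n * C_y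
        + (c₂₀ + R₂ / Real.sqrt m) * cz l
        + (c₂₀ + R₂ / Real.sqrt m + 1) * cu l
        + cz (l + 1)) :
    ∀ l ≤ L, ‖z l‖ ≤ cz l ∧ ‖u l‖ ≤ cu l := by
  have hLσ := nonneg_of_forall_abs_sub_le_mul hσ
  have ha : 0 ≤ c₁₀ + R₁ / √n := by positivity
  have hb : 0 ≤ c₂₀ + R₂ / √m := by positivity
  intro l
  induction l with
  | zero => exact fun _ => ⟨hcz0 ▸ hz0, hcu0 ▸ hu0⟩
  | succ l ih =>
    intro hl
    obtain ⟨hzl, hul⟩ := ih (by omega)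
    have hx_succ : ‖x (l + 1)‖ ≤
        (c₁₀ + R₁ / √n) * (√n * C_y) + (c₂₀ + R₂ / √m) * (cz l + cu l) := by
      have hx' : x (l + 1) = (√n)⁻¹ • Matrix.toEuclideanLin (W₁ (l + 1)) y
          + (√m)⁻¹ • Matrix.toEuclideanLin (W₂ (l + 1)) (z l - u l) :=
        WithLp.ofLp_injective 2 (hx l hl)
      rw [hx']
      refine (norm_inv_sqrt_smul_toEuclideanLin_add_le ha hb (hW₁ _ (by omega) hl)
        (hW₂ _ (by omega) hl) _ _).trans ?_
      gcongr
      exact norm_sub_le_of_le hzl hul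
    have hz_succ : ‖z (l + 1)‖ ≤ cz (l + 1) := by
      have hz' : z (l + 1) = toLp 2 fun i => σ ((x (l + 1) + u l) i) :=
        WithLp.ofLp_injective 2 (hz l hl)
      calc ‖z (l + 1)‖ ≤ L_σ * ‖x (l + 1) + u l‖ + √m * |σ 0| := by
            simpa [hz'] using EuclideanSpace.norm_toLp_comp_le hσ (x (l + 1) + u l)
        _ ≤ L_σ * ((c₁₀ + R₁ / √n) * (√n * C_y)
              + (c₂₀ + R₂ / √m) * (cz l + cu l) + cu l)
            + √m * |σ 0| := by gcongr; exact norm_add_le_of_le hx_succ hul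
        _ = cz (l + 1) := by rw [hczrec]; ring
    refine ⟨hz_succ, ?_⟩
    calc ‖u (l + 1)‖ ≤ ‖u l‖ + ‖x (l + 1)‖ + ‖z (l + 1)‖ := by
          rw [hu l hl]; exact norm_sub_le_of_le (norm_add_le _ _) le_rfl
      _ ≤ cu l + ((c₁₀ + R₁ / √n) * (√n * C_y)
            + (c₂₀ + R₂ / √m) * (cz l + cu l))
          + cz (l + 1) := by gcongr
      _ = cu (l + 1) := by rw [hcurec]; ring

/-- Bound on the hidden-layer outputs of an `L`-layer ADMM-CSNet: if `σ` is
`L_σ`-Lipschitz, `‖y‖ ≤ √n C_y`, `‖z⁰‖ ≤ √m C_z`, `‖u⁰‖ ≤ √m C_u`, and the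
per-layer weights satisfy `‖W₁^l‖ ≤ (c₁₀ + R₁/√n)√n`,
`‖W₂^l‖ ≤ (c₂₀ + R₂/√m)√m`, then `‖z^l‖ ≤ c_z^l` and `‖u^l‖ ≤ c_u^l` with the
stated recursions. -/
theorem admm_csnet_hidden_layer_norm_bound
    (n m L : ℕ) (σ : ℝ → ℝ) (L_σ : ℝ)
    (hσ : ∀ a b : ℝ, |σ a - σ b| ≤ L_σ * |a - b|)
    (c₁₀ c₂₀ R₁ R₂ C_y C_z C_u : ℝ)
    (hc₁₀ : 0 ≤ c₁₀) (hc₂₀ : 0 ≤ c₂₀) (hR₁ : 0 ≤ R₁) (hR₂ : 0 ≤ R₂)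
    (hCy : 0 ≤ C_y) (hCz : 0 ≤ C_z) (hCu : 0 ≤ C_u)
    (y : EuclideanSpace ℝ (Fin n)) (hy : ‖y‖ ≤ Real.sqrt n * C_y)
    (W₁ : ℕ → Matrix (Fin m) (Fin n) ℝ) (W₂ : ℕ → Matrix (Fin m) (Fin m) ℝ)
    (hW₁ : ∀ l, 1 ≤ l → l ≤ L →
      specNorm (W₁ l) ≤ (c₁₀ + R₁ / Real.sqrt n) * Real.sqrt n)
    (hW₂ : ∀ l, 1 ≤ l → l ≤ L →
      specNorm (W₂ l) ≤ (c₂₀ + R₂ / Real.sqrt m) * Real.sqrt m)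
    (x z u : ℕ → EuclideanSpace ℝ (Fin m))
    (hz0 : ‖z 0‖ ≤ Real.sqrt m * C_z)
    (hu0 : ‖u 0‖ ≤ Real.sqrt m * C_u)
    (hx : ∀ l, l < L → x (l + 1) = fun i =>
      (Real.sqrt n)⁻¹ * (W₁ (l + 1)).mulVec y i
        + (Real.sqrt m)⁻¹ * (W₂ (l + 1)).mulVec (z l - u l) i)
    (hz : ∀ l, l < L → z (l + 1) = fun i => σ (x (l + 1) i + u l i))
    (hu : ∀ l, l < L → u (l + 1) = u l + x (l + 1) - z (l + 1))
    (cz cu : ℕ → ℝ)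
    (hcz0 : cz 0 = Real.sqrt m * C_z) (hcu0 : cu 0 = Real.sqrt m * C_u)
    (hczrec : ∀ l, cz (l + 1) =
      L_σ * (c₁₀ + R₁ / Real.sqrt n) * Real.sqrt n * C_y
        + L_σ * (c₂₀ + R₂ / Real.sqrt m) * cz l
        + L_σ * (1 + c₂₀ + R₂ / Real.sqrt m) * cu l
        + Real.sqrt m * |σ 0|)
    (hcurec : ∀ l, cu (l + 1) =
      (c₁₀ + R₁ / Real.sqrt n) * Real.sqrt n * C_y
        + (c₂₀ + R₂ / Real.sqrt m) * cz l
        + (c₂₀ + R₂ / Real.sqrt m + 1) * cu l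
        + cz (l + 1)) :
    ∀ l ≤ L, ‖z l‖ ≤ cz l ∧ ‖u l‖ ≤ cu l :=
  admm_csnet_hidden_layer_norm_bound_general n m L σ L_σ hσ c₁₀ c₂₀ R₁ R₂ C_y C_z C_u hc₁₀ hc₂₀ hR₁
    hR₂ y hy W₁ W₂ hW₁ hW₂ x z u hz0 hu0 hx hz hu cz cu hcz0 hcu0 hczrec hcurec
end

section
/- Let σ : ℝ → ℝ be twice differentiable with |σ''(a)| ≤ β_σ for all a. Fix x̃ ∈ ℝ^m and y ∈ ℝⁿ. Then for all matrices V₁, V₂ ∈ ℝ^{m×n} with Frobenius norm at most 1, (1/n) Σ_{i=1}^m |σ''(x̃_i) (V₁ y)_i (V₂ y)_i| ≤ β_σ ‖y‖² / n. In particular, if ‖y‖² ≤ n C_y², then the (2,2,1)-norm of the second derivative of a LISTA layer with respect to the parameter matrix W₁ (the tensor with entries (1/n) σ''(x̃_i) y_{j'} y_{k'} 𝟙_{i=j=k}) is at most β_σ C_y². -/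
open scoped BigOperators

/-- The Frobenius norm of a real matrix. -/
noncomputable def frobNorm {m n : ℕ} (V : Matrix (Fin m) (Fin n) ℝ) : ℝ :=
  Real.sqrt (∑ i, ∑ j, V i j ^ 2)

/-- The `(2,2,1)`-norm of an order-3 tensor whose first two slots are indexed
by matrix index pairs: the sup over unit-Frobenius-norm matrices `V₁, V₂` of
`Σ_i |Σ_{(j,j'),(k,k')} A_{(j,j'),(k,k'),i} (V₁)_{j,j'} (V₂)_{k,k'}|`. -/
noncomputable def norm221M {m n : ℕ}
    (A : (Fin m × Fin n) → (Fin m × Fin n) → Fin m → ℝ) : ℝ :=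
  sSup {x : ℝ | ∃ V₁ V₂ : Matrix (Fin m) (Fin n) ℝ,
    frobNorm V₁ = 1 ∧ frobNorm V₂ = 1 ∧
    x = ∑ i, |∑ p, ∑ q, A p q i * V₁ p.1 p.2 * V₂ q.1 q.2|}

/-- For `σ` twice differentiable with `|σ''| ≤ β_σ`: for all matrices
`V₁, V₂` of Frobenius norm at most `1`,
`(1/n) Σ_i |σ''(x̃_i)(V₁y)_i(V₂y)_i| ≤ β_σ ‖y‖²/n`; in particular, if
`‖y‖² ≤ n C_y²`, the `(2,2,1)`-norm of the second derivative of a LISTA layer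
with respect to `W₁` (the tensor with entries `(1/n) σ''(x̃_i) y_{j'} y_{k'} 𝟙_{i=j=k}`)
is at most `β_σ C_y²`. -/
theorem lista_layer_second_derivative_W1_bound
    (n m : ℕ) (σ : ℝ → ℝ) (β_σ : ℝ)
    (hσ : Differentiable ℝ σ) (hσ' : Differentiable ℝ (deriv σ))
    (hβ : ∀ a : ℝ, |deriv (deriv σ) a| ≤ β_σ)
    (xt : Fin m → ℝ) (y : EuclideanSpace ℝ (Fin n)) (C_y : ℝ) :
    (∀ V₁ V₂ : Matrix (Fin m) (Fin n) ℝ, frobNorm V₁ ≤ 1 → frobNorm V₂ ≤ 1 →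
      (1 / (n : ℝ)) *
          ∑ i, |deriv (deriv σ) (xt i) * V₁.mulVec y i * V₂.mulVec y i|
        ≤ β_σ * ‖y‖ ^ 2 / n) ∧
    (‖y‖ ^ 2 ≤ n * C_y ^ 2 →
      norm221M (fun p q i =>
          if p.1 = i ∧ q.1 = i then
            (1 / (n : ℝ)) * deriv (deriv σ) (xt i) * y p.2 * y q.2
          else 0)
        ≤ β_σ * C_y ^ 2) := by
  have hβ0 : 0 ≤ β_σ := (abs_nonneg _).trans (hβ 0)
  have hy2 : ‖y‖ ^ 2 = ∑ j, y j ^ 2 := by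
    rw [EuclideanSpace.norm_eq, Real.sq_sqrt (by positivity)]
    simp [sq_abs]
  have row : ∀ (V : Matrix (Fin m) (Fin n) ℝ) (i : Fin m),
      |V.mulVec y i| ≤ Real.sqrt (∑ j, V i j ^ 2) * ‖y‖ := by
    intro V i
    have h := Finset.sum_mul_sq_le_sq_mul_sq Finset.univ (fun j => V i j) (fun j => y j)
    calc |V.mulVec y i| = Real.sqrt ((∑ j, V i j * y j) ^ 2) := by
          rw [Real.sqrt_sq_eq_abs]; rfl
      _ ≤ Real.sqrt ((∑ j, V i j ^ 2) * ∑ j, y j ^ 2) := Real.sqrt_le_sqrt h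
      _ = Real.sqrt (∑ j, V i j ^ 2) * Real.sqrt (∑ j, y j ^ 2) :=
          Real.sqrt_mul (by positivity) _
      _ = Real.sqrt (∑ j, V i j ^ 2) * ‖y‖ := by
          rw [← hy2, Real.sqrt_sq (norm_nonneg _)]
  have key : ∀ V₁ V₂ : Matrix (Fin m) (Fin n) ℝ, frobNorm V₁ ≤ 1 → frobNorm V₂ ≤ 1 →
      (∑ i, |deriv (deriv σ) (xt i) * V₁.mulVec y i * V₂.mulVec y i|)
        ≤ β_σ * ‖y‖ ^ 2 := by
    intro V₁ V₂ h1 h2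
    set s₁ : Fin m → ℝ := fun i => Real.sqrt (∑ j, V₁ i j ^ 2) with hs₁
    set s₂ : Fin m → ℝ := fun i => Real.sqrt (∑ j, V₂ i j ^ 2) with hs₂
    have step1 : ∀ i : Fin m, |deriv (deriv σ) (xt i) * V₁.mulVec y i * V₂.mulVec y i|
        ≤ β_σ * (s₁ i * s₂ i) * ‖y‖ ^ 2 := by
      intro i
      have h := mul_le_mul (mul_le_mul (hβ (xt i)) (row V₁ i) (abs_nonneg _) hβ0)
        (row V₂ i) (abs_nonneg _) (by positivity)
      calc |deriv (deriv σ) (xt i) * V₁.mulVec y i * V₂.mulVec y i|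
          = |deriv (deriv σ) (xt i)| * |V₁.mulVec y i| * |V₂.mulVec y i| := by
            rw [abs_mul, abs_mul]
        _ ≤ β_σ * (s₁ i * ‖y‖) * (s₂ i * ‖y‖) := h
        _ = β_σ * (s₁ i * s₂ i) * ‖y‖ ^ 2 := by ring
    have e1 : ∑ i, s₁ i ^ 2 = ∑ i, ∑ j, V₁ i j ^ 2 :=
      Finset.sum_congr rfl (fun i _ => Real.sq_sqrt (by positivity))
    have e2 : ∑ i, s₂ i ^ 2 = ∑ i, ∑ j, V₂ i j ^ 2 :=
      Finset.sum_congr rfl (fun i _ => Real.sq_sqrt (by positivity))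
    have cs : (∑ i, s₁ i * s₂ i) ≤ frobNorm V₁ * frobNorm V₂ := by
      have h := Finset.sum_mul_sq_le_sq_mul_sq Finset.univ s₁ s₂
      have hnn : 0 ≤ ∑ i, s₁ i * s₂ i :=
        Finset.sum_nonneg (fun i _ => mul_nonneg (Real.sqrt_nonneg _) (Real.sqrt_nonneg _))
      calc (∑ i, s₁ i * s₂ i) = Real.sqrt ((∑ i, s₁ i * s₂ i) ^ 2) :=
            (Real.sqrt_sq hnn).symm
        _ ≤ Real.sqrt ((∑ i, s₁ i ^ 2) * ∑ i, s₂ i ^ 2) := Real.sqrt_le_sqrt h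
        _ = Real.sqrt (∑ i, s₁ i ^ 2) * Real.sqrt (∑ i, s₂ i ^ 2) :=
            Real.sqrt_mul (by positivity) _
        _ = frobNorm V₁ * frobNorm V₂ := by rw [e1, e2]; rfl
    have hfr : frobNorm V₁ * frobNorm V₂ ≤ 1 :=
      mul_le_one₀ h1 (Real.sqrt_nonneg _) h2
    calc (∑ i, |deriv (deriv σ) (xt i) * V₁.mulVec y i * V₂.mulVec y i|)
        ≤ ∑ i, β_σ * (s₁ i * s₂ i) * ‖y‖ ^ 2 := Finset.sum_le_sum (fun i _ => step1 i)
      _ = β_σ * ‖y‖ ^ 2 * ∑ i, s₁ i * s₂ i := by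
          rw [Finset.mul_sum]; exact Finset.sum_congr rfl (fun i _ => by ring)
      _ ≤ β_σ * ‖y‖ ^ 2 * 1 := by
          exact mul_le_mul_of_nonneg_left (cs.trans hfr) (by positivity)
      _ = β_σ * ‖y‖ ^ 2 := mul_one _
  constructor
  · intro V₁ V₂ h1 h2
    have h := key V₁ V₂ h1 h2
    calc (1 / (n : ℝ)) * ∑ i, |deriv (deriv σ) (xt i) * V₁.mulVec y i * V₂.mulVec y i|
        ≤ (1 / (n : ℝ)) * (β_σ * ‖y‖ ^ 2) :=
          mul_le_mul_of_nonneg_left h (by positivity)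
      _ = β_σ * ‖y‖ ^ 2 / n := by ring
  · intro hy
    apply Real.sSup_le _ (mul_nonneg hβ0 (sq_nonneg _))
    rintro x ⟨V₁, V₂, hf1, hf2, rfl⟩
    have hinner : ∀ i : Fin m,
        (∑ p : Fin m × Fin n, ∑ q : Fin m × Fin n,
          (if p.1 = i ∧ q.1 = i then
            (1 / (n : ℝ)) * deriv (deriv σ) (xt i) * y p.2 * y q.2 else 0)
            * V₁ p.1 p.2 * V₂ q.1 q.2)
        = (1 / (n : ℝ)) * (deriv (deriv σ) (xt i) * V₁.mulVec y i * V₂.mulVec y i) := by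
      intro i
      have L : (∑ p : Fin m × Fin n, ∑ q : Fin m × Fin n,
          (if p.1 = i ∧ q.1 = i then
            (1 / (n : ℝ)) * deriv (deriv σ) (xt i) * y p.2 * y q.2 else 0)
            * V₁ p.1 p.2 * V₂ q.1 q.2)
          = ∑ j' : Fin n, ∑ k' : Fin n,
            (1 / (n : ℝ)) * deriv (deriv σ) (xt i) * y j' * y k' * V₁ i j' * V₂ i k' := by
        rw [Fintype.sum_prod_type]
        simp only [Fintype.sum_prod_type, ite_and, ite_mul, zero_mul, Finset.sum_ite_irrel,
          Finset.sum_const_zero, Finset.sum_ite_eq', Finset.mem_univ, if_true]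
      rw [L]
      have R : V₁.mulVec y i = ∑ j' : Fin n, V₁ i j' * y j' := rfl
      have R2 : V₂.mulVec y i = ∑ k' : Fin n, V₂ i k' * y k' := rfl
      rw [R, R2]
      simp only [Finset.mul_sum, Finset.sum_mul]
      rw [Finset.sum_comm]
      exact Finset.sum_congr rfl fun j' _ => Finset.sum_congr rfl fun k' _ => by ring
    beta_reduce
    have hx : (∑ i, |∑ p : Fin m × Fin n, ∑ q : Fin m × Fin n,
          (if p.1 = i ∧ q.1 = i then
            (1 / (n : ℝ)) * deriv (deriv σ) (xt i) * y p.2 * y q.2 else 0)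
            * V₁ p.1 p.2 * V₂ q.1 q.2|)
        = (1 / (n : ℝ)) *
          ∑ i, |deriv (deriv σ) (xt i) * V₁.mulVec y i * V₂.mulVec y i| := by
      rw [Finset.mul_sum]
      refine Finset.sum_congr rfl fun i _ => ?_
      rw [hinner i, abs_mul, abs_of_nonneg (by positivity : (0:ℝ) ≤ 1 / (n : ℝ))]
    rw [hx]
    rcases Nat.eq_zero_or_pos n with h0 | hpos
    · have h1n : (1 / (n : ℝ)) = 0 := by
        rw [show (n : ℝ) = 0 from by exact_mod_cast h0]
        simp
      rw [h1n, zero_mul]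
      exact mul_nonneg hβ0 (sq_nonneg _)
    · have hn : (0:ℝ) < n := by exact_mod_cast hpos
      calc (1 / (n : ℝ)) *
            ∑ i, |deriv (deriv σ) (xt i) * V₁.mulVec y i * V₂.mulVec y i|
          ≤ (1 / (n : ℝ)) * (β_σ * ‖y‖ ^ 2) :=
            mul_le_mul_of_nonneg_left (key V₁ V₂ hf1.le hf2.le) (by positivity)
        _ ≤ (1 / (n : ℝ)) * (β_σ * ((n : ℝ) * C_y ^ 2)) :=
            mul_le_mul_of_nonneg_left (mul_le_mul_of_nonneg_left hy hβ0) (by positivity)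
        _ = β_σ * C_y ^ 2 := by field_simp
end

section
/- Let L ≥ 1, let v_s ∈ ℝ^m be a standard basis vector, and for each l ∈ {1,…,L} let W₂^l ∈ ℝ^{m×m} satisfy ‖W₂^l‖ ≤ (c₂₀ + R₂/√m)√m (spectral norm), and let Σ'^l ∈ ℝ^{m×m} be a diagonal matrix whose diagonal entries have absolute value at most L_σ. Define the backward ADMM-CSNet vectors b^L = (1/√m) v_s and b^{l−1} = ((2/√m)(W₂^l)ᵀ − I) Σ'^l b^l for l = L, L−1, …, 1. Then for every l ∈ {0,1,…,L}, ‖b^l‖ ≤ L_σ^{L−l} (2(c₂₀ + R₂/√m) + 1)^{L−l}. In particular, at initialization (R₂ = 0), ‖b^l‖ ≤ L_σ^{L−l} (2c₂₀ + 1)^{L−l}. -/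
/-!
Each backward step multiplies `b^l` by the diagonal matrix `Σ'^l`, of spectral norm at most
`L_σ`, and then by `(2/√m)(W₂^l)ᵀ - I`, whose spectral norm is at most
`(2/√m)‖W₂^l‖ + 1 ≤ 2(c₂₀ + R₂/√m) + 1` since transposition preserves the spectral norm.
So the norm grows by at most the factor `L_σ (2(c₂₀ + R₂/√m) + 1)` per layer, starting from
`‖b^L‖ = 1/√m ≤ 1`.
-/

open scoped BigOperators Matrix

theorem le_geom_backward {u : ℕ → ℝ} {c : ℝ} (hc : 0 ≤ c) (L : ℕ)
    (h : ∀ l, 1 ≤ l → l ≤ L → u (l - 1) ≤ c * u l) (l : ℕ) (hl : l ≤ L) :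
    u l ≤ c ^ (L - l) * u L := by
  have := le_geom (u := fun k ↦ u (L - k)) hc (L - l) fun k hk ↦ by
    simpa [show L - (k + 1) = L - k - 1 by omega] using h (L - k) (by omega) (by omega)
  simpa [Nat.sub_sub_self hl] using this

section
open scoped Matrix.Norms.L2Operator

theorem specNorm_eq_l2_opNorm {m n : ℕ} (M : Matrix (Fin m) (Fin n) ℝ) :
    specNorm M = ‖M‖ := rfl

theorem norm_toLp_mulVec_le_specNorm {m n : ℕ} (M : Matrix (Fin m) (Fin n) ℝ)
    (x : EuclideanSpace ℝ (Fin n)) :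
    ‖(WithLp.toLp 2 (M *ᵥ x) : EuclideanSpace ℝ (Fin m))‖ ≤ specNorm M * ‖x‖ :=
  M.l2_opNorm_mulVec x

theorem specNorm_nonneg {m n : ℕ} (M : Matrix (Fin m) (Fin n) ℝ) : 0 ≤ specNorm M :=
  norm_nonneg _

theorem specNorm_mul_le {k m n : ℕ} (A : Matrix (Fin k) (Fin m) ℝ)
    (B : Matrix (Fin m) (Fin n) ℝ) :
    specNorm (A * B) ≤ specNorm A * specNorm B :=
  Matrix.l2_opNorm_mul A B

theorem specNorm_transpose {m n : ℕ} (M : Matrix (Fin m) (Fin n) ℝ) :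
    specNorm Mᵀ = specNorm M := by
  simpa [specNorm_eq_l2_opNorm, Matrix.conjTranspose_eq_transpose_of_trivial] using
    M.l2_opNorm_conjTranspose

theorem specNorm_diagonal_le {m : ℕ} {d : Fin m → ℝ} {c : ℝ} (hc : 0 ≤ c)
    (hd : ∀ i, |d i| ≤ c) :
    specNorm (Matrix.diagonal d) ≤ c := by
  rw [specNorm_eq_l2_opNorm, Matrix.l2_opNorm_diagonal]
  exact (pi_norm_le_iff_of_nonneg hc).2 hd

theorem specNorm_smul_sub_one_le {m : ℕ} (c : ℝ) (M : Matrix (Fin m) (Fin m) ℝ) :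
    specNorm (c • M - 1) ≤ |c| * specNorm M + 1 := by
  simp only [specNorm_eq_l2_opNorm]
  calc ‖c • M - 1‖ ≤ ‖c • M‖ + ‖(1 : Matrix (Fin m) (Fin m) ℝ)‖ := norm_sub_le _ _
    _ ≤ |c| * ‖M‖ + 1 := by
      gcongr
      · rw [norm_smul, Real.norm_eq_abs]
      · rw [← Matrix.l2_opNorm_toEuclideanCLM, map_one]
        exact ContinuousLinearMap.norm_id_le
end

theorem specNorm_admm_layer_le {m : ℕ} (hm : 0 < m) {W : Matrix (Fin m) (Fin m) ℝ} {X : ℝ}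
    (hW : specNorm W ≤ X * Real.sqrt m) :
    specNorm ((2 * (Real.sqrt m)⁻¹) • Wᵀ - 1) ≤ 2 * X + 1 := by
  have hsqrt : 0 < Real.sqrt m := Real.sqrt_pos.2 (Nat.cast_pos.2 hm)
  calc specNorm ((2 * (Real.sqrt m)⁻¹) • Wᵀ - 1)
      ≤ 2 * (Real.sqrt m)⁻¹ * specNorm W + 1 := by
        simpa [specNorm_transpose, abs_of_pos hsqrt] using
          specNorm_smul_sub_one_le (2 * (Real.sqrt m)⁻¹) Wᵀ
    _ ≤ 2 * (Real.sqrt m)⁻¹ * (X * Real.sqrt m) + 1 := by gcongr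
    _ = 2 * X + 1 := by field_simp

theorem norm_toLp_mulVec_diagonal_mulVec_le {m : ℕ} (A : Matrix (Fin m) (Fin m) ℝ)
    {d : Fin m → ℝ} {c : ℝ} (hc : 0 ≤ c) (hd : ∀ i, |d i| ≤ c) (x : EuclideanSpace ℝ (Fin m)) :
    ‖(WithLp.toLp 2 (A *ᵥ (Matrix.diagonal d *ᵥ x)) : EuclideanSpace ℝ (Fin m))‖
      ≤ c * specNorm A * ‖x‖ := by
  rw [Matrix.mulVec_mulVec]
  calc _ ≤ specNorm (A * Matrix.diagonal d) * ‖x‖ := norm_toLp_mulVec_le_specNorm _ x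
    _ ≤ specNorm A * specNorm (Matrix.diagonal d) * ‖x‖ := by gcongr; exact specNorm_mul_le _ _
    _ ≤ specNorm A * c * ‖x‖ := by
      gcongr
      exacts [specNorm_nonneg A, specNorm_diagonal_le hc hd]
    _ = c * specNorm A * ‖x‖ := by ring

/-- Bound on the backward (gradient) vectors of an `L`-layer ADMM-CSNet:
if `‖W₂^l‖ ≤ (c₂₀ + R₂/√m)√m` and the diagonal entries of `Σ'^l` are bounded
by `L_σ`, then the vectors `b^L = (1/√m)v_s`,
`b^{l−1} = ((2/√m)(W₂^l)ᵀ − I) Σ'^l b^l` satisfy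
`‖b^l‖ ≤ L_σ^{L−l}(2(c₂₀ + R₂/√m) + 1)^{L−l}`; in particular, at
initialization (`R₂ = 0`), `‖b^l‖ ≤ L_σ^{L−l}(2c₂₀ + 1)^{L−l}`. -/
theorem admm_backward_vector_norm_bound
    (m L : ℕ) (hL : 1 ≤ L) (L_σ c₂₀ R₂ : ℝ)
    (s : Fin m)
    (W₂ : ℕ → Matrix (Fin m) (Fin m) ℝ)
    (hW₂ : ∀ l, 1 ≤ l → l ≤ L →
      specNorm (W₂ l) ≤ (c₂₀ + R₂ / Real.sqrt m) * Real.sqrt m)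
    (d : ℕ → Fin m → ℝ)
    (hd : ∀ l, 1 ≤ l → l ≤ L → ∀ i, |d l i| ≤ L_σ)
    (b : ℕ → EuclideanSpace ℝ (Fin m))
    (hbL : b L = (Real.sqrt m)⁻¹ • (EuclideanSpace.single s (1 : ℝ)))
    (hbrec : ∀ l, 1 ≤ l → l ≤ L →
      b (l - 1) =
        (WithLp.toLp 2 (((2 * (Real.sqrt m)⁻¹) • (W₂ l)ᵀ - 1).mulVec
            ((Matrix.diagonal (d l)).mulVec (b l))) :
          EuclideanSpace ℝ (Fin m))) :
    (∀ l ≤ L, ‖b l‖ ≤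
      L_σ ^ (L - l) * (2 * (c₂₀ + R₂ / Real.sqrt m) + 1) ^ (L - l)) ∧
    (R₂ = 0 → ∀ l ≤ L, ‖b l‖ ≤ L_σ ^ (L - l) * (2 * c₂₀ + 1) ^ (L - l)) := by
  set X := c₂₀ + R₂ / Real.sqrt m
  have hm : 0 < m := s.pos
  have hsqrt : 1 ≤ Real.sqrt m := Real.one_le_sqrt.2 (Nat.one_le_cast.2 hm)
  have hLσ : 0 ≤ L_σ := (abs_nonneg _).trans (hd 1 le_rfl hL s)
  have hX : 0 ≤ X :=
    nonneg_of_mul_nonneg_left ((specNorm_nonneg _).trans (hW₂ 1 le_rfl hL)) (by positivity)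
  have hstep : ∀ l, 1 ≤ l → l ≤ L → ‖b (l - 1)‖ ≤ (L_σ * (2 * X + 1)) * ‖b l‖ := fun l h1 h2 ↦ by
    rw [hbrec l h1 h2]
    grw [norm_toLp_mulVec_diagonal_mulVec_le _ hLσ (hd l h1 h2),
      specNorm_admm_layer_le hm (hW₂ l h1 h2)]
  have hbase : ‖b L‖ ≤ 1 := by
    rw [hbL, norm_smul, PiLp.norm_single, norm_one, mul_one, norm_inv,
      Real.norm_of_nonneg (by positivity)]
    exact inv_le_one_of_one_le₀ hsqrt
  have hbound : ∀ l ≤ L, ‖b l‖ ≤ L_σ ^ (L - l) * (2 * X + 1) ^ (L - l) := fun l hl ↦ by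
    grw [le_geom_backward (u := fun l ↦ ‖b l‖) (by positivity) L hstep l hl, hbase, mul_one,
      mul_pow]
  exact ⟨hbound, fun hR l hl ↦ by simpa [X, hR] using hbound l hl⟩
end

section
/- Consider the two-layer LISTA network with parameters w = (W₁¹, W₂¹, W₁², W₂²) ∈ ℝ^{m×n} × ℝ^{m×m} × ℝ^{m×n} × ℝ^{m×m}: x̃¹ = (1/√n) W₁¹ y + (1/√m) W₂¹ x⁰, x¹ = σ(x̃¹), x̃² = (1/√n) W₁² y + (1/√m) W₂² x¹, and output coordinate f_s = (1/√m) σ(x̃²_s), where σ : ℝ → ℝ is differentiable with |σ'(a)| ≤ L_σ for all a and σ(0) = 0. Write L̂ = L_σ/√m, ŷ = ‖y‖²/n, x̂ = ‖x⁰‖²/m. Then the squared Euclidean norm of the gradient of f_s with respect to all parameters satisfies ‖∇_w f_s‖² ≤ L̂²(ŷ + L̂² ‖x̃¹‖²) + L̂⁴ (ŷ + x̂) ‖v_sᵀ W₂²‖², where v_s ∈ ℝ^m is the s-th standard basis vector. Consequently, for T training samples containing y as the first input, the minimum eigenvalue of the tangent kernel matrix K(w) is bounded above by the same quantity. -/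
open scoped BigOperators Matrix

/-- Index type for the parameters `(W₁¹, W₂¹, W₁², W₂²)` of a two-layer LISTA
network. -/
abbrev ListaIdx (m n : ℕ) :=
  (Fin m × Fin n) ⊕ (Fin m × Fin m) ⊕ (Fin m × Fin n) ⊕ (Fin m × Fin m)

/-!
By the chain rule `∇f_s = σ'(x̃²_s)/√m · ∇x̃²_s`, and `∇x̃²_s` splits over the four parameter
blocks: the second-layer blocks contribute `‖y‖²/n + ‖σ(x̃¹)‖²/m`, and since `x̃¹_j` only
depends on the `j`-th rows of `W₁¹, W₂¹`, the first-layer blocks contribute exactly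
`(‖y‖²/n + ‖x⁰‖²/m) · Σ_j (W₂²_{sj} σ'(x̃¹_j))²/m`. Bounding `|σ'| ≤ L_σ` and
`|σ(t)| ≤ L_σ |t|` gives the gradient estimate. The diagonal entry of the tangent kernel at
`(s, first sample)` is `‖∇f_s‖²`, and the least eigenvalue of a symmetric matrix is at most any
diagonal entry.
-/

open Finset

lemma Matrix.IsHermitian.iInf_eigenvalues_le_apply_self {κ : Type*} [Fintype κ] [DecidableEq κ]
    {A : Matrix κ κ ℝ} (hA : A.IsHermitian) (a : κ) : ⨅ i, hA.eigenvalues i ≤ A a a := by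
  set U : Matrix κ κ ℝ := (hA.eigenvectorUnitary : Matrix κ κ ℝ)
  have hdiag : A a a = ∑ t, hA.eigenvalues t * U a t ^ 2 := by
    nth_rewrite 1 [hA.spectral_theorem]
    simp [U, Matrix.mul_apply, Matrix.diagonal_apply, sq, mul_comm, mul_left_comm]
  have hrow : ∑ t, U a t ^ 2 = 1 := by
    have h := congrFun (congrFun (Matrix.mem_unitaryGroup_iff.mp hA.eigenvectorUnitary.2) a) a
    simpa [U, Matrix.mul_apply, sq] using h
  calc ⨅ i, hA.eigenvalues i = ∑ t, (⨅ i, hA.eigenvalues i) * U a t ^ 2 := by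
        rw [← mul_sum, hrow, mul_one]
    _ ≤ A a a := hdiag ▸ sum_le_sum fun t _ =>
        mul_le_mul_of_nonneg_right (ciInf_le (Set.finite_range _).bddBelow t) (sq_nonneg _)

section Gradient

variable {ι : Type*} [Fintype ι] [DecidableEq ι]

lemma norm_sq_gradient_eq_sum_fderiv_single (f : EuclideanSpace ℝ ι → ℝ)
    (w : EuclideanSpace ℝ ι) :
    ‖gradient f w‖ ^ 2 = ∑ p, fderiv ℝ f w (EuclideanSpace.single p 1) ^ 2 := by
  simp [EuclideanSpace.norm_sq_eq, ← inner_gradient_left, EuclideanSpace.inner_single_right]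

lemma tangentKernel_apply_self {κ : Type*} [Fintype κ]
    {F : EuclideanSpace ℝ ι → EuclideanSpace ℝ κ} {w : EuclideanSpace ℝ ι}
    (hF : DifferentiableAt ℝ F w) (a : κ) :
    tangentKernel F w a a = ‖gradient (fun u => F u a) w‖ ^ 2 := by
  have hFa : fderiv ℝ (fun u => F u a) w = (EuclideanSpace.proj a).comp (fderiv ℝ F w) :=
    ((EuclideanSpace.proj (𝕜 := ℝ) a).hasFDerivAt.comp w hF.hasFDerivAt).fderiv
  rw [norm_sq_gradient_eq_sum_fderiv_single, hFa]
  simp [tangentKernel, Matrix.mul_apply, sq]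

end Gradient

lemma abs_le_mul_abs_of_abs_deriv_le {σ : ℝ → ℝ} {L : ℝ} (hσ : Differentiable ℝ σ)
    (hσ' : ∀ a, |deriv σ a| ≤ L) (hσ0 : σ 0 = 0) (t : ℝ) : |σ t| ≤ L * |t| := by
  have hL : 0 ≤ L := (abs_nonneg _).trans (hσ' 0)
  have hlip : LipschitzWith (Real.toNNReal L) σ :=
    lipschitzWith_of_nnnorm_deriv_le hσ fun a => by
      rw [← NNReal.coe_le_coe, Real.coe_toNNReal _ hL, coe_nnnorm]; exact hσ' a
  simpa [Real.dist_eq, hσ0, Real.coe_toNNReal _ hL] using hlip.dist_le_mul t 0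

namespace Lista

variable {m n : ℕ}

noncomputable def preact₁ (x0 : EuclideanSpace ℝ (Fin m))
    (u : EuclideanSpace ℝ (ListaIdx m n)) (y : EuclideanSpace ℝ (Fin n)) :
    EuclideanSpace ℝ (Fin m) :=
  WithLp.toLp 2 fun i =>
    (Real.sqrt n)⁻¹ * ∑ j, u (Sum.inl (i, j)) * y j
      + (Real.sqrt m)⁻¹ * ∑ j, u (Sum.inr (Sum.inl (i, j))) * x0 j

noncomputable def preact₂ (σ : ℝ → ℝ) (x0 : EuclideanSpace ℝ (Fin m))
    (u : EuclideanSpace ℝ (ListaIdx m n)) (y : EuclideanSpace ℝ (Fin n)) :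
    EuclideanSpace ℝ (Fin m) :=
  WithLp.toLp 2 fun i =>
    (Real.sqrt n)⁻¹ * ∑ j, u (Sum.inr (Sum.inr (Sum.inl (i, j)))) * y j
      + (Real.sqrt m)⁻¹ * ∑ j, u (Sum.inr (Sum.inr (Sum.inr (i, j)))) * σ (preact₁ x0 u y j)

variable (σ : ℝ → ℝ) (x0 : EuclideanSpace ℝ (Fin m)) (y : EuclideanSpace ℝ (Fin n))

noncomputable def preact₁CLM (j : Fin m) : EuclideanSpace ℝ (ListaIdx m n) →L[ℝ] ℝ :=
  LinearMap.toContinuousLinearMap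
    { toFun := fun u => preact₁ x0 u y j
      map_add' := fun u v => by
        simp only [preact₁, PiLp.add_apply, add_mul, sum_add_distrib]; ring
      map_smul' := fun c u => by
        simp only [preact₁, PiLp.smul_apply, smul_eq_mul, mul_assoc, ← mul_sum,
          RingHom.id_apply]
        ring }

lemma preact₁CLM_apply (j : Fin m) (u : EuclideanSpace ℝ (ListaIdx m n)) :
    preact₁CLM x0 y j u = preact₁ x0 u y j := rfl

noncomputable def preact₂Deriv (s : Fin m) (w : EuclideanSpace ℝ (ListaIdx m n)) :
    EuclideanSpace ℝ (ListaIdx m n) →L[ℝ] ℝ :=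
  (Real.sqrt n)⁻¹ • ∑ k, y k • EuclideanSpace.proj (Sum.inr (Sum.inr (Sum.inl (s, k))))
    + (Real.sqrt m)⁻¹ • ∑ j,
      (w (Sum.inr (Sum.inr (Sum.inr (s, j)))) • deriv σ (preact₁ x0 w y j)
          • preact₁CLM x0 y j
        + σ (preact₁ x0 w y j) • EuclideanSpace.proj (Sum.inr (Sum.inr (Sum.inr (s, j)))))

lemma hasFDerivAt_preact₂ (hσ : Differentiable ℝ σ) (s : Fin m)
    (w : EuclideanSpace ℝ (ListaIdx m n)) :
    HasFDerivAt (fun u => preact₂ σ x0 u y s) (preact₂Deriv σ x0 y s w) w := by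
  have hproj (q : ListaIdx m n) :
      HasFDerivAt (fun u : EuclideanSpace ℝ (ListaIdx m n) => u q)
        (EuclideanSpace.proj (𝕜 := ℝ) q) w :=
    (EuclideanSpace.proj (𝕜 := ℝ) q).hasFDerivAt
  have hσ₁ (j : Fin m) : HasFDerivAt (fun u => σ (preact₁ x0 u y j))
      (deriv σ (preact₁ x0 w y j) • preact₁CLM x0 y j) w :=
    (hσ _).hasDerivAt.comp_hasFDerivAt w (preact₁CLM x0 y j).hasFDerivAt
  simp only [preact₂, WithLp.ofLp_toLp]
  exact ((HasFDerivAt.fun_sum fun k _ =>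
      (hproj (Sum.inr (Sum.inr (Sum.inl (s, k))))).mul_const (y k)).const_mul _).fun_add
    ((HasFDerivAt.fun_sum fun j _ =>
      (hproj (Sum.inr (Sum.inr (Sum.inr (s, j))))).fun_mul (hσ₁ j)).const_mul _)

lemma sum_sq_preact₂Deriv_single (s : Fin m) (w : EuclideanSpace ℝ (ListaIdx m n)) :
    ∑ p, preact₂Deriv σ x0 y s w (EuclideanSpace.single p 1) ^ 2 =
      ‖y‖ ^ 2 / n + (∑ j, σ (preact₁ x0 w y j) ^ 2) / m
        + (‖y‖ ^ 2 / n + ‖x0‖ ^ 2 / m) *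
            (∑ j, (w (Sum.inr (Sum.inr (Sum.inr (s, j)))) * deriv σ (preact₁ x0 w y j)) ^ 2)
            / m := by
  simp only [Fintype.sum_sum_type, Fintype.sum_prod_type, preact₂Deriv]
  generalize preact₁ x0 w y = x₁
  simp only [add_apply, smul_apply, _root_.sum_apply, PiLp.proj_apply, ne_eq, reduceCtorEq,
    not_false_eq_true, PiLp.single_eq_of_ne, smul_eq_mul, mul_zero, sum_const_zero,
    preact₁CLM_apply, preact₁, PiLp.single_apply, Sum.inl.injEq, Sum.inr.injEq, Prod.mk.injEq,
    ite_and, ite_mul, mul_ite, one_mul, zero_mul, mul_one, add_zero, zero_add, sum_ite_irrel,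
    sum_ite_eq, sum_ite_eq', mem_univ, ↓reduceIte, mul_pow, inv_pow, Nat.cast_nonneg,
    Real.sq_sqrt, ite_pow, OfNat.ofNat_ne_zero, zero_pow, EuclideanSpace.norm_sq_eq,
    Real.norm_eq_abs, sq_abs]
  simp only [← mul_sum]
  simp only [← mul_assoc, ← sum_mul]
  ring

lemma hasFDerivAt_output (hσ : Differentiable ℝ σ) (s : Fin m)
    (w : EuclideanSpace ℝ (ListaIdx m n)) :
    HasFDerivAt (fun u => (Real.sqrt m)⁻¹ * σ (preact₂ σ x0 u y s))
      (((Real.sqrt m)⁻¹ * deriv σ (preact₂ σ x0 w y s)) • preact₂Deriv σ x0 y s w)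
      w := by
  rw [mul_smul]
  exact ((hσ _).hasDerivAt.comp_hasFDerivAt w (hasFDerivAt_preact₂ σ x0 y hσ s w)).const_mul _

theorem norm_sq_gradient_output_le {L : ℝ} (hσ : Differentiable ℝ σ)
    (hσ' : ∀ a, |deriv σ a| ≤ L) (hσ0 : σ 0 = 0) (s : Fin m)
    (w : EuclideanSpace ℝ (ListaIdx m n)) :
    ‖gradient (fun u => (Real.sqrt m)⁻¹ * σ (preact₂ σ x0 u y s)) w‖ ^ 2 ≤
      (L / Real.sqrt m) ^ 2 * (‖y‖ ^ 2 / n + (L / Real.sqrt m) ^ 2 * ‖preact₁ x0 w y‖ ^ 2)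
        + (L / Real.sqrt m) ^ 4 * (‖y‖ ^ 2 / n + ‖x0‖ ^ 2 / m) *
            ∑ j, w (Sum.inr (Sum.inr (Sum.inr (s, j)))) ^ 2 := by
  have hderiv (a : ℝ) : deriv σ a ^ 2 ≤ L ^ 2 :=
    sq_le_sq' (abs_le.mp (hσ' a)).1 (abs_le.mp (hσ' a)).2
  have hact (t : ℝ) : σ t ^ 2 ≤ L ^ 2 * t ^ 2 := by
    have h := abs_le.mp (abs_le_mul_abs_of_abs_deriv_le hσ hσ' hσ0 t)
    simpa [mul_pow] using sq_le_sq' h.1 h.2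
  have hL : (L / Real.sqrt m) ^ 2 = L ^ 2 / m := by rw [div_pow, Real.sq_sqrt (Nat.cast_nonneg _)]
  have hσ₁ : ∑ j, σ (preact₁ x0 w y j) ^ 2 ≤ L ^ 2 * ‖preact₁ x0 w y‖ ^ 2 := by
    rw [EuclideanSpace.norm_sq_eq, mul_sum]
    exact sum_le_sum fun j _ => by simpa using hact _
  have hW : ∑ j, w (Sum.inr (Sum.inr (Sum.inr (s, j)))) ^ 2 * deriv σ (preact₁ x0 w y j) ^ 2
      ≤ L ^ 2 * ∑ j, w (Sum.inr (Sum.inr (Sum.inr (s, j)))) ^ 2 := by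
    rw [mul_sum]
    exact sum_le_sum fun j _ => by
      rw [mul_comm (L ^ 2)]; exact mul_le_mul_of_nonneg_left (hderiv _) (sq_nonneg _)
  rw [norm_sq_gradient_eq_sum_fderiv_single, (hasFDerivAt_output σ x0 y hσ s w).fderiv]
  simp only [smul_apply, smul_eq_mul, mul_pow, ← mul_sum, sum_sq_preact₂Deriv_single]
  calc (Real.sqrt m)⁻¹ ^ 2 * deriv σ (preact₂ σ x0 w y s) ^ 2 * _
      ≤ L ^ 2 / m * (‖y‖ ^ 2 / n + L ^ 2 * ‖preact₁ x0 w y‖ ^ 2 / m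
          + (‖y‖ ^ 2 / n + ‖x0‖ ^ 2 / m)
              * (L ^ 2 * ∑ j, w (Sum.inr (Sum.inr (Sum.inr (s, j)))) ^ 2) / m) := by
        rw [inv_pow, Real.sq_sqrt (Nat.cast_nonneg _), inv_mul_eq_div]
        gcongr ?_ / _ * (_ + ?_ / _ + _ * ?_ / _)
        exact hderiv _
    _ = _ := by rw [show (L / Real.sqrt m) ^ 4 = ((L / Real.sqrt m) ^ 2) ^ 2 by ring, hL]; ring

end Lista

theorem two_layer_lista_gradient_and_min_eigenvalue_bound_general
    (m n T : ℕ) (hT : 0 < T)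
    (σ : ℝ → ℝ) (L_σ : ℝ)
    (hσ : Differentiable ℝ σ) (hσ' : ∀ a : ℝ, |deriv σ a| ≤ L_σ)
    (hσ0 : σ 0 = 0)
    (y : EuclideanSpace ℝ (Fin n)) (x0 : EuclideanSpace ℝ (Fin m)) (s : Fin m)
    (xt1 : EuclideanSpace ℝ (ListaIdx m n) → EuclideanSpace ℝ (Fin n) →
      EuclideanSpace ℝ (Fin m))
    (hxt1 : xt1 = fun w yv => WithLp.toLp 2 fun i =>
      (Real.sqrt n)⁻¹ * ∑ j, w (Sum.inl (i, j)) * yv j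
        + (Real.sqrt m)⁻¹ * ∑ j, w (Sum.inr (Sum.inl (i, j))) * x0 j)
    (xt2 : EuclideanSpace ℝ (ListaIdx m n) → EuclideanSpace ℝ (Fin n) →
      EuclideanSpace ℝ (Fin m))
    (hxt2 : xt2 = fun w yv => WithLp.toLp 2 fun i =>
      (Real.sqrt n)⁻¹ * ∑ j, w (Sum.inr (Sum.inr (Sum.inl (i, j)))) * yv j
        + (Real.sqrt m)⁻¹ *
            ∑ j, w (Sum.inr (Sum.inr (Sum.inr (i, j)))) * σ (xt1 w yv j))
    (w : EuclideanSpace ℝ (ListaIdx m n))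
    (Y : Fin T → EuclideanSpace ℝ (Fin n)) (hY : Y ⟨0, hT⟩ = y)
    (F : EuclideanSpace ℝ (ListaIdx m n) → EuclideanSpace ℝ (Fin m × Fin T))
    (hF : F = fun u => WithLp.toLp 2 fun ai => (Real.sqrt m)⁻¹ * σ (xt2 u (Y ai.2) ai.1))
    (hherm : ∀ u, (tangentKernel F u).IsHermitian) :
    ‖gradient (fun u => (Real.sqrt m)⁻¹ * σ (xt2 u y s)) w‖ ^ 2 ≤
      (L_σ / Real.sqrt m) ^ 2 *
          (‖y‖ ^ 2 / n + (L_σ / Real.sqrt m) ^ 2 * ‖xt1 w y‖ ^ 2)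
        + (L_σ / Real.sqrt m) ^ 4 * (‖y‖ ^ 2 / n + ‖x0‖ ^ 2 / m) *
            (∑ j, w (Sum.inr (Sum.inr (Sum.inr (s, j)))) ^ 2) ∧
    ⨅ a : Fin m × Fin T, (hherm w).eigenvalues a ≤
      (L_σ / Real.sqrt m) ^ 2 *
          (‖y‖ ^ 2 / n + (L_σ / Real.sqrt m) ^ 2 * ‖xt1 w y‖ ^ 2)
        + (L_σ / Real.sqrt m) ^ 4 * (‖y‖ ^ 2 / n + ‖x0‖ ^ 2 / m) *
            (∑ j, w (Sum.inr (Sum.inr (Sum.inr (s, j)))) ^ 2) := by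
  subst hY
  obtain rfl : xt1 = Lista.preact₁ x0 := hxt1
  obtain rfl : xt2 = Lista.preact₂ σ x0 := hxt2
  have hgrad := Lista.norm_sq_gradient_output_le σ x0 (Y ⟨0, hT⟩) hσ hσ' hσ0 s w
  refine ⟨hgrad, ?_⟩
  have hFw : DifferentiableAt ℝ F w := hF ▸ differentiableAt_euclidean.mpr fun ai =>
    (Lista.hasFDerivAt_output σ x0 (Y ai.2) hσ ai.1 w).differentiableAt
  calc ⨅ a, (hherm w).eigenvalues a ≤ tangentKernel F w (s, ⟨0, hT⟩) (s, ⟨0, hT⟩) :=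
        (hherm w).iInf_eigenvalues_le_apply_self _
    _ = ‖gradient (fun u => F u (s, ⟨0, hT⟩)) w‖ ^ 2 := tangentKernel_apply_self hFw _
    _ ≤ _ := hF ▸ hgrad

/-- For the two-layer LISTA network with output coordinate
`f_s = (1/√m) σ(x̃²_s)`, `|σ'| ≤ L_σ`, `σ(0) = 0`, writing `L̂ = L_σ/√m`,
`ŷ = ‖y‖²/n`, `x̂ = ‖x⁰‖²/m`, the squared gradient norm satisfies
`‖∇_w f_s‖² ≤ L̂²(ŷ + L̂²‖x̃¹‖²) + L̂⁴(ŷ + x̂)‖v_sᵀW₂²‖²`; consequently, for `T`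
training samples containing `y` as the first input, the minimum eigenvalue of
the tangent kernel matrix is bounded above by the same quantity. -/
theorem two_layer_lista_gradient_and_min_eigenvalue_bound
    (m n T : ℕ) (hm : 0 < m) (hn : 0 < n) (hT : 0 < T)
    (σ : ℝ → ℝ) (L_σ : ℝ)
    (hσ : Differentiable ℝ σ) (hσ' : ∀ a : ℝ, |deriv σ a| ≤ L_σ)
    (hσ0 : σ 0 = 0)
    (y : EuclideanSpace ℝ (Fin n)) (x0 : EuclideanSpace ℝ (Fin m)) (s : Fin m)
    (xt1 : EuclideanSpace ℝ (ListaIdx m n) → EuclideanSpace ℝ (Fin n) →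
      EuclideanSpace ℝ (Fin m))
    (hxt1 : xt1 = fun w yv => WithLp.toLp 2 fun i =>
      (Real.sqrt n)⁻¹ * ∑ j, w (Sum.inl (i, j)) * yv j
        + (Real.sqrt m)⁻¹ * ∑ j, w (Sum.inr (Sum.inl (i, j))) * x0 j)
    (xt2 : EuclideanSpace ℝ (ListaIdx m n) → EuclideanSpace ℝ (Fin n) →
      EuclideanSpace ℝ (Fin m))
    (hxt2 : xt2 = fun w yv => WithLp.toLp 2 fun i =>
      (Real.sqrt n)⁻¹ * ∑ j, w (Sum.inr (Sum.inr (Sum.inl (i, j)))) * yv j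
        + (Real.sqrt m)⁻¹ *
            ∑ j, w (Sum.inr (Sum.inr (Sum.inr (i, j)))) * σ (xt1 w yv j))
    (w : EuclideanSpace ℝ (ListaIdx m n))
    (Y : Fin T → EuclideanSpace ℝ (Fin n)) (hY : Y ⟨0, hT⟩ = y)
    (F : EuclideanSpace ℝ (ListaIdx m n) → EuclideanSpace ℝ (Fin m × Fin T))
    (hF : F = fun u => WithLp.toLp 2 fun ai => (Real.sqrt m)⁻¹ * σ (xt2 u (Y ai.2) ai.1))
    (hherm : ∀ u, (tangentKernel F u).IsHermitian) :
    ‖gradient (fun u => (Real.sqrt m)⁻¹ * σ (xt2 u y s)) w‖ ^ 2 ≤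
      (L_σ / Real.sqrt m) ^ 2 *
          (‖y‖ ^ 2 / n + (L_σ / Real.sqrt m) ^ 2 * ‖xt1 w y‖ ^ 2)
        + (L_σ / Real.sqrt m) ^ 4 * (‖y‖ ^ 2 / n + ‖x0‖ ^ 2 / m) *
            (∑ j, w (Sum.inr (Sum.inr (Sum.inr (s, j)))) ^ 2) ∧
    ⨅ a : Fin m × Fin T, (hherm w).eigenvalues a ≤
      (L_σ / Real.sqrt m) ^ 2 *
          (‖y‖ ^ 2 / n + (L_σ / Real.sqrt m) ^ 2 * ‖xt1 w y‖ ^ 2)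
        + (L_σ / Real.sqrt m) ^ 4 * (‖y‖ ^ 2 / n + ‖x0‖ ^ 2 / m) *
            (∑ j, w (Sum.inr (Sum.inr (Sum.inr (s, j)))) ^ 2) :=
  two_layer_lista_gradient_and_min_eigenvalue_bound_general m n T hT σ L_σ hσ hσ' hσ0 y x0 s xt1
    hxt1 xt2 hxt2 w Y hY F hF hherm
end
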